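/- Let ε, E, ω, α, λ be real numbers with λ ≠ 0, ε ≠ 0, ε ≠ −1/2 and ε ≠ −1, and let Φ be a real-analytic function on a neighborhood of 0 satisfying the generalized Calogero–Yukawa reduced equation Φ''(x) + (2ε/x)·Φ'(x) + [2E − ω²x² − (2√2·α/x)·exp(−√2·x/λ)]·Φ(x) = 0 for all x in some interval (0, δ) with δ > 0. Writing C_k = Φ^{(k)}(0)/k! for the Taylor coefficients of Φ at 0, the third coefficient satisfies C_3 = (√2·α·C_0/(3(ε+1)))·[ 2α²/(ε(2ε+1)) − (3ε+1)(E + 2α/λ)/(ε(2ε+1)) + 1/λ² ]. -/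

import Mathlib

/-!
Multiplying the equation by `x` turns it into `x Φ'' + 2ε Φ' + r Φ = 0` with the entire
coefficient `r x = 2E x - ω² x³ - 2√2 α exp (-√2 x / λ)`. The left-hand side is analytic at `0`
and vanishes on `(0, δ)`, so by the identity theorem it vanishes on a neighbourhood of `0`.
Differentiating `n` times at `0` with the Leibniz rule gives the Frobenius recurrence
`(n + 2ε) Φ⁽ⁿ⁺¹⁾(0) + ∑ₖ (n choose k) r⁽ᵏ⁾(0) Φ⁽ⁿ⁻ᵏ⁾(0) = 0`, and the cases `n = 0, 1, 2`
determine `Φ'(0)`, `Φ''(0)`, `Φ'''(0)` in terms of `Φ(0)`.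
-/

open Filter Topology Finset Real

theorem AnalyticAt.eventually_eq_zero_of_eventually_nhdsGT {E : Type*} [NormedAddCommGroup E]
    [NormedSpace ℝ E] {f : ℝ → E} {a : ℝ} (hf : AnalyticAt ℝ f a)
    (h : ∀ᶠ x in 𝓝[>] a, f x = 0) : ∀ᶠ x in 𝓝 a, f x = 0 :=
  hf.frequently_zero_iff_eventually_zero.1 (h.frequently.filter_mono (nhdsGT_le_nhdsNE a))

theorem iteratedDeriv_id_mul_deriv_zero {𝕜 : Type*} [NontriviallyNormedField 𝕜] {f : 𝕜 → 𝕜}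
    {n : ℕ} (hf : ContDiffAt 𝕜 n (deriv f) 0) :
    iteratedDeriv n (fun x => x * deriv f x) 0 = n * iteratedDeriv n f 0 := by
  rw [iteratedDeriv_fun_mul (f := fun x => x) contDiffAt_id hf]
  rcases n with _ | n
  · simp
  · simp [iteratedDeriv_fun_id_zero, iteratedDeriv_succ']

attribute [local fun_prop] AnalyticAt.contDiffAt in
theorem iteratedDeriv_recurrence_of_regularSingular {𝕜 : Type*} [NontriviallyNormedField 𝕜]
    [CompleteSpace 𝕜] {Φ r : 𝕜 → 𝕜} (c : 𝕜) (hΦ : AnalyticAt 𝕜 Φ 0) (hr : AnalyticAt 𝕜 r 0)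
    (h : ∀ᶠ x in 𝓝 0, x * deriv (deriv Φ) x + c * deriv Φ x + r x * Φ x = 0) (n : ℕ) :
    (n + c) * iteratedDeriv (n + 1) Φ 0
      + ∑ k ∈ range (n + 1), n.choose k * iteratedDeriv k r 0 * iteratedDeriv (n - k) Φ 0 = 0 := by
  have hn := EventuallyEq.iteratedDeriv_eq n (g := fun _ => (0 : 𝕜)) h
  have hΦ' := hΦ.deriv
  have hΦ'' := hΦ'.deriv
  rw [iteratedDeriv_const, ite_self, iteratedDeriv_fun_add (by fun_prop) (by fun_prop),
    iteratedDeriv_fun_add (by fun_prop) (by fun_prop),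
    iteratedDeriv_id_mul_deriv_zero (by fun_prop), iteratedDeriv_const_mul_field,
    iteratedDeriv_fun_mul (by fun_prop) (by fun_prop), ← iteratedDeriv_succ'] at hn
  linear_combination hn

theorem iteratedDeriv_linear_sub_cubic_sub_exp_zero (a b c d : ℝ) (n : ℕ) :
    iteratedDeriv n (fun x => a * x - b * x ^ 3 - c * exp (d * x)) 0
      = (if n = 1 then a else 0) - (if n = 3 then 6 * b else 0) - c * d ^ n := by
  rw [iteratedDeriv_fun_sub (by fun_prop) (by fun_prop),
    iteratedDeriv_fun_sub (by fun_prop) (by fun_prop), iteratedDeriv_const_mul_field,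
    iteratedDeriv_const_mul_field, iteratedDeriv_const_mul_field, iteratedDeriv_fun_id_zero,
    iteratedDeriv_fun_pow_zero, iteratedDeriv_exp_const_mul]
  split_ifs <;> simp_all [Nat.factorial, mul_comm]

theorem calogeroYukawa_third_coefficient_of_recurrence {ε E α lam c₀ c₁ c₂ c₃ : ℝ}
    (hε : ε ≠ 0) (hε' : ε ≠ -(1/2)) (hε'' : ε ≠ -1)
    (h₀ : 2 * ε * c₁ - 2 * √2 * α * c₀ = 0)
    (h₁ : (1 + 2 * ε) * c₂ - 2 * √2 * α * c₁ + (2 * E + 4 * α / lam) * c₀ = 0)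
    (h₂ : (2 + 2 * ε) * c₃ - 2 * √2 * α * c₂ + 2 * (2 * E + 4 * α / lam) * c₁
      - 4 * √2 * α / lam ^ 2 * c₀ = 0) :
    c₃ / (Nat.factorial 3 : ℝ)
      = (√2 * α * c₀ / (3 * (ε + 1)))
        * (2 * α ^ 2 / (ε * (2 * ε + 1)) - (3 * ε + 1) * (E + 2 * α / lam) / (ε * (2 * ε + 1))
            + 1 / lam ^ 2) := by
  have hs : √2 ^ 2 = 2 := sq_sqrt zero_le_two
  have hε₁ : 2 * ε + 1 ≠ 0 := fun h => hε' (by linarith)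
  have hε₂ : 2 * ε + 2 ≠ 0 := fun h => hε'' (by linarith)
  have hc₁ : c₁ = √2 * α * c₀ / ε := by
    rw [eq_div_iff hε]
    linear_combination h₀ / 2
  have hc₂ : c₂ = (4 * α ^ 2 / ε - 2 * E - 4 * α / lam) * c₀ / (2 * ε + 1) := by
    rw [eq_div_iff hε₁]
    linear_combination h₁ + 2 * √2 * α * hc₁ + 2 * α ^ 2 * c₀ / ε * hs
  have hc₃ : c₃ = (2 * √2 * α * c₂ - 2 * (2 * E + 4 * α / lam) * c₁
      + 4 * √2 * α / lam ^ 2 * c₀) / (2 * ε + 2) := by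
    rw [eq_div_iff hε₂]
    linear_combination h₂
  rw [hc₃, hc₂, hc₁, Nat.factorial]
  field_simp
  ring

theorem calogero_yukawa_third_coefficient_general
    (ε E ω α lam : ℝ) (hε : ε ≠ 0)
    (hε' : ε ≠ -(1/2)) (hε'' : ε ≠ -1)
    (Φ : ℝ → ℝ) (hA : AnalyticAt ℝ Φ 0)
    (δ : ℝ) (hδ : 0 < δ)
    (hODE : ∀ x ∈ Set.Ioo (0 : ℝ) δ,
      deriv (deriv Φ) x + (2 * ε / x) * deriv Φ x +
        (2 * E - ω ^ 2 * x ^ 2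
          - (2 * Real.sqrt 2 * α / x) * Real.exp (-Real.sqrt 2 * x / lam)) * Φ x = 0) :
    iteratedDeriv 3 Φ 0 / (Nat.factorial 3 : ℝ)
      = (Real.sqrt 2 * α * Φ 0 / (3 * (ε + 1)))
        * (2 * α ^ 2 / (ε * (2 * ε + 1))
            - (3 * ε + 1) * (E + 2 * α / lam) / (ε * (2 * ε + 1))
            + 1 / lam ^ 2) := by
  set r : ℝ → ℝ := fun x => 2 * E * x - ω ^ 2 * x ^ 3 - 2 * √2 * α * exp (-√2 / lam * x)
  have hr : AnalyticAt ℝ r 0 := by fun_prop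
  have hreg : ∀ᶠ x in 𝓝 0, x * deriv (deriv Φ) x + 2 * ε * deriv Φ x + r x * Φ x = 0 := by
    refine AnalyticAt.eventually_eq_zero_of_eventually_nhdsGT (by fun_prop) ?_
    filter_upwards [Ioo_mem_nhdsGT hδ] with x hx
    have hx0 : x ≠ 0 := hx.1.ne'
    rw [← mul_zero x, ← hODE x hx]
    simp only [r]
    field_simp
  have hrec := iteratedDeriv_recurrence_of_regularSingular (2 * ε) hA hr hreg
  have h₀ := hrec 0
  have h₁ := hrec 1
  have h₂ := hrec 2
  simp only [r, sum_range_succ, sum_range_zero, iteratedDeriv_linear_sub_cubic_sub_exp_zero,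
    iteratedDeriv_zero, iteratedDeriv_one, Nat.choose_zero_right, Nat.choose_self,
    Nat.choose_one_right, Nat.reduceAdd, Nat.reduceSub, Nat.reduceEqDiff, ↓reduceIte] at h₀ h₁ h₂
  have hs : √2 ^ 2 = 2 := sq_sqrt zero_le_two
  refine calogeroYukawa_third_coefficient_of_recurrence (c₁ := deriv Φ 0)
    (c₂ := iteratedDeriv 2 Φ 0) hε hε' hε'' (by linear_combination h₀)
    (by linear_combination h₁ - 2 * α / lam * Φ 0 * hs) ?_
  linear_combination h₂ + (2 * √2 * α / lam ^ 2 * Φ 0 - 4 * α / lam * deriv Φ 0) * hs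

/-- Third Taylor coefficient of an analytic solution of the generalized
Calogero–Yukawa reduced equation, in terms of the zero mode `C₀ = Φ(0)`:
`C₃ = (√2·α·C₀/(3(ε+1)))·[2α²/(ε(2ε+1)) − (3ε+1)(E+2α/λ)/(ε(2ε+1)) + 1/λ²]`. -/
theorem calogero_yukawa_third_coefficient
    (ε E ω α lam : ℝ) (hlam : lam ≠ 0) (hε : ε ≠ 0)
    (hε' : ε ≠ -(1/2)) (hε'' : ε ≠ -1)
    (Φ : ℝ → ℝ) (hA : AnalyticAt ℝ Φ 0)
    (δ : ℝ) (hδ : 0 < δ)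
    (hODE : ∀ x ∈ Set.Ioo (0 : ℝ) δ,
      deriv (deriv Φ) x + (2 * ε / x) * deriv Φ x +
        (2 * E - ω ^ 2 * x ^ 2
          - (2 * Real.sqrt 2 * α / x) * Real.exp (-Real.sqrt 2 * x / lam)) * Φ x = 0) :
    iteratedDeriv 3 Φ 0 / (Nat.factorial 3 : ℝ)
      = (Real.sqrt 2 * α * Φ 0 / (3 * (ε + 1)))
        * (2 * α ^ 2 / (ε * (2 * ε + 1))
            - (3 * ε + 1) * (E + 2 * α / lam) / (ε * (2 * ε + 1))
            + 1 / lam ^ 2) :=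
  calogero_yukawa_third_coefficient_general ε E ω α lam hε hε' hε'' Φ hA δ hδ hODE
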